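/- arXiv:1107.1632 — 4 statements merged into one kernel-verified Lean document; each statement's English description precedes it below -/
import Mathlib

section
/- Let λ ∈ [0,1], η ∈ (0,1), and define α = log 2 / (log 2 − λ·log η), so that 2 = (2/η^λ)^α. Let Δ : ℕ → ℕ be a function, P ≥ 1 and C ≥ 0 constants, such that for every r there exist integers p ≤ P, q ≤ p with q/p ≥ λ, and integers l₁,…,l_{2^p} with l₁+⋯+l_{2^p} ≤ η^q·r + 2^p·C and Δ(r) ≤ Δ(l₁)+⋯+Δ(l_{2^p}). Assume moreover Δ(r) ≤ K·r for all r. Then there exists a constant L (depending on C, K, P, η, λ) with Δ(r) ≤ L·r^α for all r ≥ 1. -/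
set_option maxHeartbeats 1000000

lemma sum_rpow_le_card_rpow_mul {ι : Type*} (t : Finset ι) (f : ι → ℝ)
    (hf : ∀ i ∈ t, 0 ≤ f i) {α : ℝ} (h0 : 0 < α) (h1 : α ≤ 1) :
    ∑ i ∈ t, f i ^ α ≤ (t.card : ℝ) ^ (1 - α) * (∑ i ∈ t, f i) ^ α := by
  rcases t.eq_empty_or_nonempty with rfl | ht
  · simp [Real.zero_rpow h0.ne']
  have hn : (0:ℝ) < t.card := by exact_mod_cast Finset.card_pos.mpr ht
  have hp : (1:ℝ) ≤ 1/α := by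
    rw [le_div_iff₀ h0]; linarith
  have key := Real.arith_mean_le_rpow_mean t (fun _ => (t.card:ℝ)⁻¹) (fun i => f i ^ α)
    (fun i _ => by positivity) (by simp [Finset.sum_const]; field_simp)
    (fun i hi => Real.rpow_nonneg (hf i hi) _) hp
  have hcongr : ∑ i ∈ t, (t.card:ℝ)⁻¹ * (f i ^ α) ^ (1/α) = ∑ i ∈ t, (t.card:ℝ)⁻¹ * f i := by
    refine Finset.sum_congr rfl (fun i hi => ?_)
    rw [← Real.rpow_mul (hf i hi), mul_one_div_cancel h0.ne', Real.rpow_one]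
  rw [hcongr, one_div_one_div, ← Finset.mul_sum, ← Finset.mul_sum] at key
  have hS : 0 ≤ ∑ i ∈ t, f i := Finset.sum_nonneg hf
  have key2 : (t.card:ℝ)⁻¹ * ∑ i ∈ t, f i ^ α ≤ ((t.card:ℝ)⁻¹)^α * (∑ i ∈ t, f i)^α := by
    rwa [← Real.mul_rpow (by positivity) hS]
  calc ∑ i ∈ t, f i ^ α = (t.card:ℝ) * ((t.card:ℝ)⁻¹ * ∑ i ∈ t, f i ^ α) := by
        field_simp
    _ ≤ (t.card:ℝ) * (((t.card:ℝ)⁻¹)^α * (∑ i ∈ t, f i)^α) := by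
        apply mul_le_mul_of_nonneg_left key2 hn.le
    _ = (t.card : ℝ) ^ (1 - α) * (∑ i ∈ t, f i) ^ α := by
        rw [← mul_assoc, Real.rpow_sub hn, Real.rpow_one, Real.inv_rpow hn.le, div_eq_mul_inv]

theorem growth_lemma (lam η α : ℝ)
    (hlam : lam ∈ Set.Icc (0 : ℝ) 1) (hη : η ∈ Set.Ioo (0 : ℝ) 1)
    (hα : α = Real.log 2 / (Real.log 2 - lam * Real.log η))
    (Δ : ℕ → ℕ) (P : ℕ) (hP : 1 ≤ P) (C K : ℝ) (hC : 0 ≤ C)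
    (hrec : ∀ r : ℕ, ∃ p q : ℕ, p ≤ P ∧ q ≤ p ∧ lam ≤ (q : ℝ) / (p : ℝ) ∧
      ∃ l : Fin (2 ^ p) → ℕ,
        (∑ i, (l i : ℝ)) ≤ η ^ q * (r : ℝ) + 2 ^ p * C ∧
        (Δ r : ℝ) ≤ ∑ i, (Δ (l i) : ℝ))
    (hK : ∀ r : ℕ, (Δ r : ℝ) ≤ K * r) :
    ∃ L : ℝ, ∀ r : ℕ, 1 ≤ r → (Δ r : ℝ) ≤ L * (r : ℝ) ^ α := by
  obtain ⟨hl0, hl1⟩ := hlam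
  obtain ⟨hη0, hη1⟩ := hη
  have hlog2 : 0 < Real.log 2 := Real.log_pos one_lt_two
  have hlogη : Real.log η < 0 := Real.log_neg hη0 hη1
  have hK0 : 0 ≤ K := by
    have h1 := hK 1
    rw [Nat.cast_one, mul_one] at h1
    exact le_trans (Nat.cast_nonneg _) h1
  rcases eq_or_lt_of_le hl0 with hlam0 | hlam0
  · -- lam = 0, α = 1
    refine ⟨K, fun r hr => ?_⟩
    have hα1 : α = 1 := by rw [hα, ← hlam0]; simp [hlog2.ne']
    rw [hα1, Real.rpow_one]
    exact hK r
  -- lam > 0 case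
  have hD : 0 < Real.log 2 - lam * Real.log η := by
    have h := mul_nonpos_of_nonneg_of_nonpos hl0 hlogη.le
    linarith
  have hα0 : 0 < α := by rw [hα]; positivity
  have hα1 : α ≤ 1 := by
    rw [hα, div_le_one hD]
    have h := mul_nonpos_of_nonneg_of_nonpos hl0 hlogη.le
    linarith
  have hid : (1 - α) * Real.log 2 + lam * α * Real.log η = 0 := by
    have h : α * (Real.log 2 - lam * Real.log η) = Real.log 2 := by
      rw [hα, div_mul_cancel₀ _ hD.ne']
    linear_combination -h
  have hμ0 : 0 < η ^ lam := Real.rpow_pos_of_pos hη0 _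
  have hμ1 : η ^ lam < 1 := Real.rpow_lt_one hη0.le hη1 hlam0
  set μ := η ^ lam with hμdef
  set η' := (1 + μ)/2 with hη'def
  have hη'0 : 0 < η' := by rw [hη'def]; linarith
  have hη'1 : η' < 1 := by rw [hη'def]; linarith
  have hμη' : μ < η' := by rw [hη'def]; linarith
  have hημ : η ≤ μ := by
    have h := Real.rpow_le_rpow_of_exponent_ge hη0 hη1.le hl1 (x := η)
    rwa [Real.rpow_one] at h
  set c₁ := η ^ (-(lam * (P:ℝ))) * 2^P * C with hc₁def
  have hc₁0 : 0 ≤ c₁ := by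
    rw [hc₁def]
    have := Real.rpow_pos_of_pos hη0 (-(lam * (P:ℝ)))
    positivity
  set B := α * c₁ * η' / (1 - η') with hBdef
  have hB0 : 0 ≤ B := by
    rw [hBdef]
    apply div_nonneg (by positivity) (by linarith)
  set R₀ : ℝ := 2 * 2^P * C / (1 - μ) + 1 with hR₀def
  have hR₀aux : 0 ≤ 2 * 2^P * C / (1 - μ) := by
    apply div_nonneg (by positivity) (by linarith)
  have hR₀1 : 1 ≤ R₀ := by rw [hR₀def]; linarith
  have hR₀prop : ∀ x : ℝ, R₀ ≤ x → μ * x + 2^P * C ≤ η' * x := by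
    intro x hx
    rw [hR₀def] at hx
    have hx1 : 2 * 2^P * C / (1 - μ) ≤ x := by linarith
    have h2 : 2 * 2^P * C ≤ (1 - μ) * x := by
      rw [div_le_iff₀ (by linarith : (0:ℝ) < 1 - μ)] at hx1; linarith
    rw [hη'def]; linarith
  set L := (K * R₀ + 1) * Real.exp B with hLdef
  have hL0 : 0 < L := by
    rw [hLdef]
    have : 0 < K * R₀ + 1 := by
      have h := mul_nonneg hK0 (by linarith : (0:ℝ) ≤ R₀)
      linarith
    positivity
  have hΔ0 : (Δ 0 : ℝ) = 0 := by
    have h1 := hK 0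
    rw [Nat.cast_zero, mul_zero] at h1
    exact le_antisymm h1 (Nat.cast_nonneg _)
  have key : ∀ r : ℕ, 1 ≤ r → (Δ r : ℝ) ≤ L * (r:ℝ) ^ α * Real.exp (-(B/(r:ℝ))) := by
    intro r
    induction r using Nat.strong_induction_on with
    | _ r IH =>
    intro hr1
    have hr0 : (0:ℝ) < (r:ℝ) := by exact_mod_cast hr1
    have hr1' : (1:ℝ) ≤ (r:ℝ) := by exact_mod_cast hr1
    have hrα : (1:ℝ) ≤ (r:ℝ)^α := Real.one_le_rpow hr1' hα0.le
    by_cases hsmall : (r:ℝ) < R₀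
    · -- base case
      have hBr : -B ≤ -(B/(r:ℝ)) := neg_le_neg (div_le_self hB0 hr1')
      calc (Δ r : ℝ) ≤ K * r := hK r
        _ ≤ K * R₀ + 1 := by
            have h := mul_le_mul_of_nonneg_left hsmall.le hK0
            linarith
        _ = L * Real.exp (-B) := by
            rw [hLdef, mul_assoc, ← Real.exp_add, add_neg_cancel, Real.exp_zero, mul_one]
        _ ≤ L * (r:ℝ)^α * Real.exp (-(B/(r:ℝ))) := by
            have he := Real.exp_le_exp.mpr hBr
            have hep := Real.exp_pos (-(B/(r:ℝ)))
            calc L * Real.exp (-B) ≤ L * Real.exp (-(B/(r:ℝ))) :=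
                  mul_le_mul_of_nonneg_left he hL0.le
              _ ≤ (L * (r:ℝ)^α) * Real.exp (-(B/(r:ℝ))) :=
                  mul_le_mul_of_nonneg_right (le_mul_of_one_le_right hL0.le hrα) hep.le
    · push_neg at hsmall
      obtain ⟨p, q, hpP, hqp, hlpq, l, hsum, hΔr⟩ := hrec r
      have hp0 : 0 < p := by
        rcases Nat.eq_zero_or_pos p with rfl | h
        · exfalso
          have : q = 0 := Nat.le_zero.mp hqp
          rw [this] at hlpq
          norm_num at hlpq
          linarith
        · exact h
      have hpR : (0:ℝ) < (p:ℝ) := by exact_mod_cast hp0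
      have hq : lam * (p:ℝ) ≤ (q:ℝ) := by
        rw [le_div_iff₀ hpR] at hlpq; linarith
      have hq1 : 1 ≤ q := by
        by_contra h
        push_neg at h
        interval_cases q
        simp only [Nat.cast_zero] at hq
        linarith [mul_pos hlam0 hpR]
      set S := ∑ i, (l i:ℝ) with hSdef
      have hS0 : 0 ≤ S := Finset.sum_nonneg (fun i _ => Nat.cast_nonneg _)
      have hηq : η^q ≤ μ := by
        calc η^q ≤ η^1 := pow_le_pow_of_le_one hη0.le hη1.le hq1
          _ = η := pow_one η
          _ ≤ μ := hημ
      have h2pP : (2:ℝ)^p ≤ 2^P := pow_le_pow_right₀ one_le_two hpP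
      have hSb : S ≤ μ * r + 2^P * C := by
        refine hsum.trans ?_
        have h1 : η^q * (r:ℝ) ≤ μ * r := mul_le_mul_of_nonneg_right hηq hr0.le
        have h2 : (2:ℝ)^p * C ≤ 2^P * C := mul_le_mul_of_nonneg_right h2pP hC
        linarith
      have hSη' : S ≤ η' * r := hSb.trans (hR₀prop r hsmall)
      have hlS : ∀ i, (l i : ℝ) ≤ S := by
        intro i
        rw [hSdef]
        exact Finset.single_le_sum (f := fun j => ((l j : ℕ) : ℝ))
          (fun j _ => Nat.cast_nonneg _) (Finset.mem_univ i)
      have hlr : ∀ i, l i < r := by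
        intro i
        have h : (l i:ℝ) < r := by
          have h1 := (hlS i).trans hSη'
          have h2 := mul_lt_mul_of_pos_right hη'1 hr0
          linarith
        exact_mod_cast h
      classical
      set t := Finset.univ.filter (fun i : Fin (2^p) => l i ≠ 0) with htdef
      have hsum_t : ∑ i ∈ t, (l i:ℝ) = S := by
        rw [hSdef, htdef]
        refine Finset.sum_filter_of_ne (fun x _ hx => ?_)
        intro h0
        exact hx (by rw [h0, Nat.cast_zero])
      have hΔt : ∑ i, (Δ (l i):ℝ) = ∑ i ∈ t, (Δ (l i):ℝ) := by
        rw [htdef]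
        refine (Finset.sum_filter_of_ne (fun x _ hx => ?_)).symm
        intro h0
        exact hx (by rw [h0]; exact hΔ0)
      rcases t.eq_empty_or_nonempty with hte | hte
      · have hz : (Δ r:ℝ) ≤ 0 := by
          rw [hΔt, hte] at hΔr
          simpa using hΔr
        refine hz.trans ?_
        exact mul_nonneg (mul_nonneg hL0.le (Real.rpow_nonneg hr0.le α)) (Real.exp_pos _).le
      · have hS1 : 1 ≤ S := by
          rw [← hsum_t]
          calc (1:ℝ) ≤ t.card := by exact_mod_cast Finset.card_pos.mpr hte
            _ = ∑ _i ∈ t, (1:ℝ) := by simp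
            _ ≤ ∑ i ∈ t, (l i:ℝ) := by
                refine Finset.sum_le_sum (fun i hi => ?_)
                have hne : l i ≠ 0 := (Finset.mem_filter.mp hi).2
                exact_mod_cast Nat.one_le_iff_ne_zero.mpr hne
        set S' := η ^ (lam * (p:ℝ)) * r + 2^p * C with hS'def
        have hSS' : S ≤ S' := by
          refine hsum.trans ?_
          rw [hS'def]
          have hηq' : η^q ≤ η ^ (lam * (p:ℝ)) := by
            rw [← Real.rpow_natCast η q]
            exact Real.rpow_le_rpow_of_exponent_ge hη0 hη1.le hq
          have := mul_le_mul_of_nonneg_right hηq' hr0.le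
          linarith
        have hS'1 : 1 ≤ S' := hS1.trans hSS'
        have hS'0 : 0 < S' := by linarith
        -- step 1: apply IH to each term
        have step1 : (Δ r:ℝ) ≤ L * Real.exp (-(B/S)) * ∑ i ∈ t, (l i:ℝ)^α := by
          rw [hΔt] at hΔr
          refine hΔr.trans ?_
          rw [Finset.mul_sum]
          refine Finset.sum_le_sum (fun i hi => ?_)
          have hli1 : 1 ≤ l i := Nat.one_le_iff_ne_zero.mpr (Finset.mem_filter.mp hi).2
          have hli0 : (0:ℝ) < (l i:ℝ) := by exact_mod_cast hli1
          refine (IH (l i) (hlr i) hli1).trans ?_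
          have hBl : B/S ≤ B/(l i:ℝ) := div_le_div_of_nonneg_left hB0 hli0 (hlS i)
          have he := Real.exp_le_exp.mpr (neg_le_neg hBl)
          have hlα : (0:ℝ) ≤ (l i:ℝ)^α := Real.rpow_nonneg hli0.le _
          calc L * (l i:ℝ)^α * Real.exp (-(B/(l i:ℝ)))
              ≤ L * (l i:ℝ)^α * Real.exp (-(B/S)) := by
                apply mul_le_mul_of_nonneg_left he (by positivity)
            _ = L * Real.exp (-(B/S)) * (l i:ℝ)^α := by ring
        -- step 2: concavity
        have step2 : ∑ i ∈ t, (l i:ℝ)^α ≤ ((2:ℝ)^p)^(1-α) * S^α := by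
          refine (sum_rpow_le_card_rpow_mul t _ (fun i _ => Nat.cast_nonneg _) hα0 hα1).trans ?_
          rw [hsum_t]
          have hcard : (t.card:ℝ) ≤ (2:ℝ)^p := by
            have h1 : t.card ≤ 2^p := by
              calc t.card ≤ (Finset.univ : Finset (Fin (2^p))).card := Finset.card_filter_le _ _
                _ = 2^p := by simp
            exact_mod_cast h1
          have := Real.rpow_le_rpow (Nat.cast_nonneg t.card) hcard (by linarith : (0:ℝ) ≤ 1-α)
          exact mul_le_mul_of_nonneg_right this (Real.rpow_nonneg hS0 _)
        -- step 3: monotone in S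
        have step3 : Real.exp (-(B/S)) * S^α ≤ Real.exp (-(B/S')) * S'^α := by
          have h1 : B/S' ≤ B/S := div_le_div_of_nonneg_left hB0 (by linarith) hSS'
          have h2 := Real.exp_le_exp.mpr (neg_le_neg h1)
          have h3 : S^α ≤ S'^α := Real.rpow_le_rpow hS0 hSS' hα0.le
          exact mul_le_mul h2 h3 (Real.rpow_nonneg hS0 α) (Real.exp_pos _).le
        -- algebraic identity
        have hid2 : ((2:ℝ)^p)^(1-α) * S'^α = (η^(-(lam*(p:ℝ))) * S')^α := by
          have h1 : ((2:ℝ)^p)^(1-α) = (η^(-(lam*(p:ℝ))))^α := by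
            rw [← Real.rpow_natCast 2 p, ← Real.rpow_mul (by norm_num : (0:ℝ) ≤ 2),
                ← Real.rpow_mul hη0.le]
            rw [Real.rpow_def_of_pos (by norm_num : (0:ℝ) < 2),
                Real.rpow_def_of_pos hη0]
            congr 1
            linear_combination (p:ℝ) * hid
          rw [h1, ← Real.mul_rpow (Real.rpow_nonneg hη0.le _) hS'0.le]
        have hexpand : η^(-(lam*(p:ℝ))) * S' = (r:ℝ) + η^(-(lam*(p:ℝ))) * ((2:ℝ)^p * C) := by
          rw [hS'def, mul_add, ← mul_assoc, ← Real.rpow_add hη0, neg_add_cancel,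
              Real.rpow_zero, one_mul]
        have hc₁p : η^(-(lam*(p:ℝ))) * ((2:ℝ)^p * C) ≤ c₁ := by
          rw [hc₁def, mul_assoc]
          have h1 : η^(-(lam*(p:ℝ))) ≤ η^(-(lam*(P:ℝ))) := by
            apply Real.rpow_le_rpow_of_exponent_ge hη0 hη1.le
            have h1 : (p:ℝ) ≤ (P:ℝ) := by exact_mod_cast hpP
            have h2 := mul_le_mul_of_nonneg_left h1 hl0
            linarith
          have h2 : (2:ℝ)^p * C ≤ 2^P * C := mul_le_mul_of_nonneg_right h2pP hC
          have h3 : (0:ℝ) ≤ η^(-(lam*(p:ℝ))) := (Real.rpow_pos_of_pos hη0 _).le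
          have h4 : (0:ℝ) ≤ (2:ℝ)^p * C := by positivity
          exact mul_le_mul h1 h2 h4 (Real.rpow_pos_of_pos hη0 _).le
        have hrpow : (η^(-(lam*(p:ℝ))) * S')^α ≤ ((r:ℝ) + c₁)^α := by
          apply Real.rpow_le_rpow (mul_nonneg (Real.rpow_pos_of_pos hη0 _).le hS'0.le)
          · rw [hexpand]; linarith
          · exact hα0.le
        -- (r+c₁)^α ≤ r^α exp(α c₁ / r)
        have hrc : ((r:ℝ) + c₁)^α ≤ (r:ℝ)^α * Real.exp (α*(c₁/(r:ℝ))) := by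
          have h1 : (r:ℝ) + c₁ ≤ r * Real.exp (c₁/(r:ℝ)) := by
            have h2 := Real.add_one_le_exp (c₁/(r:ℝ))
            have h3 : (r:ℝ) + c₁ = r * (c₁/(r:ℝ) + 1) := by field_simp; ring
            rw [h3]
            exact mul_le_mul_of_nonneg_left h2 hr0.le
          calc ((r:ℝ)+c₁)^α ≤ ((r:ℝ) * Real.exp (c₁/(r:ℝ)))^α :=
                Real.rpow_le_rpow (add_nonneg hr0.le hc₁0) h1 hα0.le
            _ = (r:ℝ)^α * (Real.exp (c₁/(r:ℝ)))^α :=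
                Real.mul_rpow hr0.le (Real.exp_pos _).le
            _ = (r:ℝ)^α * Real.exp (α*(c₁/(r:ℝ))) := by
                rw [← Real.exp_mul, mul_comm α]
        -- exp(-(B/S')) ≤ exp(-(B/(η' r)))
        have hS'η' : S' ≤ η' * r := by
          rw [hS'def]
          have h1 : η^(lam*(p:ℝ)) ≤ μ := by
            rw [hμdef]
            apply Real.rpow_le_rpow_of_exponent_ge hη0 hη1.le
            have h1 : (1:ℝ) ≤ (p:ℝ) := by exact_mod_cast hp0
            have h2 := mul_le_mul_of_nonneg_left h1 hl0
            linarith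
          have h2 : η^(lam*(p:ℝ)) * r ≤ μ * r := mul_le_mul_of_nonneg_right h1 hr0.le
          have h3 : (2:ℝ)^p * C ≤ 2^P * C := mul_le_mul_of_nonneg_right h2pP hC
          have := hR₀prop r hsmall
          linarith
        have hexp2 : Real.exp (-(B/S')) ≤ Real.exp (-(B/(η'*(r:ℝ)))) := by
          apply Real.exp_le_exp.mpr
          apply neg_le_neg
          exact div_le_div_of_nonneg_left hB0 hS'0 hS'η'
        -- final exponent computation
        have hBeq : B * (1 - η') = α*c₁*η' := by
          rw [hBdef, div_mul_cancel₀]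
          linarith
        have hBη' : α*c₁ + B ≤ B/η' := by
          rw [le_div_iff₀ hη'0]
          have h : (α*c₁ + B) * η' = α*c₁*η' + B*η' := by ring
          rw [h]
          linarith [hBeq]
        have hfinal : α*(c₁/(r:ℝ)) + -(B/(η'*(r:ℝ))) ≤ -(B/(r:ℝ)) := by
          rw [← sub_nonneg]
          have e : -(B/(r:ℝ)) - (α*(c₁/(r:ℝ)) + -(B/(η'*(r:ℝ)))) = (B/η' - B - α*c₁)/(r:ℝ) := by
            field_simp
            ring
          rw [e]
          exact div_nonneg (by linarith) hr0.le
        calc (Δ r:ℝ)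
            ≤ L * Real.exp (-(B/S)) * ∑ i ∈ t, (l i:ℝ)^α := step1
          _ ≤ L * Real.exp (-(B/S)) * (((2:ℝ)^p)^(1-α) * S^α) := by
              apply mul_le_mul_of_nonneg_left step2
              exact mul_nonneg hL0.le (Real.exp_pos _).le
          _ = L * ((2:ℝ)^p)^(1-α) * (Real.exp (-(B/S)) * S^α) := by ring
          _ ≤ L * ((2:ℝ)^p)^(1-α) * (Real.exp (-(B/S')) * S'^α) := by
              apply mul_le_mul_of_nonneg_left step3
              exact mul_nonneg hL0.le (Real.rpow_nonneg (by positivity) _)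
          _ = L * (Real.exp (-(B/S')) * (((2:ℝ)^p)^(1-α) * S'^α)) := by ring
          _ = L * (Real.exp (-(B/S')) * (η^(-(lam*(p:ℝ))) * S')^α) := by rw [hid2]
          _ ≤ L * (Real.exp (-(B/(η'*(r:ℝ)))) * ((r:ℝ) + c₁)^α) := by
              apply mul_le_mul_of_nonneg_left _ hL0.le
              exact mul_le_mul hexp2 hrpow
                (Real.rpow_nonneg (mul_nonneg (Real.rpow_pos_of_pos hη0 _).le hS'0.le) _)
                (Real.exp_pos _).le
          _ ≤ L * (Real.exp (-(B/(η'*(r:ℝ)))) * ((r:ℝ)^α * Real.exp (α*(c₁/(r:ℝ))))) := by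
              apply mul_le_mul_of_nonneg_left _ hL0.le
              exact mul_le_mul_of_nonneg_left hrc (Real.exp_pos _).le
          _ = L * (r:ℝ)^α * Real.exp (α*(c₁/(r:ℝ)) + -(B/(η'*(r:ℝ)))) := by
              rw [Real.exp_add]; ring
          _ ≤ L * (r:ℝ)^α * Real.exp (-(B/(r:ℝ))) := by
              apply mul_le_mul_of_nonneg_left (Real.exp_le_exp.mpr hfinal)
              exact mul_nonneg hL0.le (Real.rpow_nonneg hr0.le _)
  refine ⟨L, fun r hr => ?_⟩
  have h1 := key r hr
  have h2 : Real.exp (-(B/(r:ℝ))) ≤ 1 := by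
    apply Real.exp_le_one_iff.mpr
    have hr0 : (0:ℝ) < (r:ℝ) := by exact_mod_cast hr
    simp only [neg_nonpos]
    positivity
  have hr0 : (0:ℝ) ≤ (r:ℝ)^α := Real.rpow_nonneg (Nat.cast_nonneg r) α
  calc (Δ r : ℝ) ≤ L * (r:ℝ)^α * Real.exp (-(B/(r:ℝ))) := h1
    _ ≤ L * (r:ℝ)^α * 1 := mul_le_mul_of_nonneg_left h2 (mul_nonneg hL0.le hr0)
    _ = L * (r:ℝ)^α := mul_one _
end

section
/- Let A₀ be the 3×3 matrix with rows (2,0,1),(0,2,1),(0,0,1) and C the permutation matrix with rows (0,1,0),(0,0,1),(1,0,0). Then A₀·C has characteristic polynomial X^3 − X^2 − 2X − 4, this polynomial has a unique positive real root ρ, its two other (complex) roots have absolute value strictly less than ρ, and ρ = 2/η where η is the real root of X^3 + X^2 + X − 2. -/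
/-!
After multiplying out, `A₀ C = !![1, 2, 0; 1, 0, 2; 1, 0, 0]`, and everything is about the cubic
`f x = x ^ 3 - x ^ 2 - 2 * x - 4`. A positive root `ρ` exceeds `11 / 5`, which makes the cofactor
`(f x - f ρ) / (x - ρ) = x ^ 2 + (ρ - 1) * x + (ρ ^ 2 - ρ - 2)` have negative discriminant: the other
two roots are complex conjugates with `‖z‖ ^ 2 = ρ ^ 2 - ρ - 2 < ρ ^ 2`. Finally
`η ^ 3 * f (2 / η) = -4 * (η ^ 3 + η ^ 2 + η - 2)`, so `2 / η` is a positive root of `f`.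
-/

open Polynomial

theorem Complex.normSq_eq_of_sq_add_mul_add_eq_zero {p q : ℝ} (hdisc : p ^ 2 < 4 * q) {z : ℂ}
    (hz : z ^ 2 + p * z + q = 0) : Complex.normSq z = q := by
  have hre := congrArg Complex.re hz
  have him := congrArg Complex.im hz
  simp only [pow_two, Complex.add_re, Complex.mul_re, Complex.ofReal_re, Complex.ofReal_im,
    Complex.add_im, Complex.mul_im, Complex.zero_re, Complex.zero_im] at hre him
  rw [Complex.normSq_apply]
  rcases mul_eq_zero.mp (show z.im * (2 * z.re + p) = 0 by linear_combination him) with h | h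
  · rw [h] at hre
    nlinarith [sq_nonneg (2 * z.re + p)]
  · linear_combination -hre + z.re * h

theorem charpoly_mul_A0_C :
    (!![2, 0, 1; 0, 2, 1; 0, 0, 1] * !![0, 1, 0; 0, 0, 1; 1, 0, 0] :
      Matrix (Fin 3) (Fin 3) ℝ).charpoly = X ^ 3 - X ^ 2 - C 2 * X - C 4 := by
  have hmul : (!![2, 0, 1; 0, 2, 1; 0, 0, 1] * !![0, 1, 0; 0, 0, 1; 1, 0, 0] :
      Matrix (Fin 3) (Fin 3) ℝ) = !![1, 2, 0; 1, 0, 2; 1, 0, 0] := by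
    simp
  rw [hmul, Matrix.charpoly, Matrix.det_fin_three]
  simp only [Fin.isValue, Matrix.charmatrix_apply_eq, Matrix.charmatrix_apply_ne, Matrix.of_apply,
    Matrix.cons_val', Matrix.cons_val_zero, Matrix.cons_val_one, Matrix.cons_val, Matrix.cons_val_fin_one,
    ne_eq, Fin.reduceEq, not_false_eq_true, map_zero, map_one, map_ofNat]
  ring

section PositiveRoot

variable {ρ : ℝ}

theorem lt_of_pos_root_cubic (h0 : 0 < ρ) (hρ : ρ ^ 3 - ρ ^ 2 - 2 * ρ - 4 = 0) : 11 / 5 < ρ := by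
  by_contra! hle
  nlinarith [mul_pos h0 h0]

theorem existsUnique_pos_root_cubic : ∃! ρ : ℝ, 0 < ρ ∧ ρ ^ 3 - ρ ^ 2 - 2 * ρ - 4 = 0 := by
  obtain ⟨ρ, hρI, hρ⟩ := intermediate_value_Icc (by norm_num : (2 : ℝ) ≤ 3)
    (f := fun x : ℝ => x ^ 3 - x ^ 2 - 2 * x - 4) (by fun_prop) (show (0 : ℝ) ∈ _ by norm_num)
  refine ⟨ρ, ⟨by linarith [hρI.1], hρ⟩, fun σ ⟨hσ0, hσ⟩ => ?_⟩
  have hρ' := lt_of_pos_root_cubic (by linarith [hρI.1]) hρ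
  have hσ' := lt_of_pos_root_cubic hσ0 hσ
  have hcofactor : 0 < σ ^ 2 + σ * ρ + ρ ^ 2 - σ - ρ - 2 := by nlinarith
  have hfactor : (σ - ρ) * (σ ^ 2 + σ * ρ + ρ ^ 2 - σ - ρ - 2) = 0 := by
    linear_combination hσ - hρ
  linarith [(mul_eq_zero.mp hfactor).resolve_right hcofactor.ne']

theorem norm_lt_of_root_cubic (h0 : 0 < ρ) (hρ : ρ ^ 3 - ρ ^ 2 - 2 * ρ - 4 = 0) {z : ℂ}
    (hz : z ^ 3 - z ^ 2 - 2 * z - 4 = 0) (hne : z ≠ ρ) : ‖z‖ < ρ := by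
  have hbig := lt_of_pos_root_cubic h0 hρ
  have hρc : (ρ : ℂ) ^ 3 - (ρ : ℂ) ^ 2 - 2 * ρ - 4 = 0 := by exact_mod_cast hρ
  have hfactor : (z - ρ) * (z ^ 2 + ((ρ - 1 : ℝ) : ℂ) * z + ((ρ ^ 2 - ρ - 2 : ℝ) : ℂ)) = 0 := by
    push_cast
    linear_combination hz - hρc
  have hquad := (mul_eq_zero.mp hfactor).resolve_left (sub_ne_zero.mpr hne)
  have hnormSq := Complex.normSq_eq_of_sq_add_mul_add_eq_zero (by nlinarith) hquad
  have hsq : ‖z‖ ^ 2 < ρ ^ 2 := by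
    rw [Complex.sq_norm, hnormSq]
    linarith
  exact (pow_lt_pow_iff_left₀ (norm_nonneg z) h0.le two_ne_zero).mp hsq

theorem eq_two_div_of_root_cubic (h0 : 0 < ρ) (hρ : ρ ^ 3 - ρ ^ 2 - 2 * ρ - 4 = 0) {η : ℝ}
    (hη : η ^ 3 + η ^ 2 + η - 2 = 0) : ρ = 2 / η := by
  have hη0 : 0 < η := by
    by_contra! hle
    nlinarith [sq_nonneg (2 * η + 1)]
  have hroot : (2 / η) ^ 3 - (2 / η) ^ 2 - 2 * (2 / η) - 4 = 0 := by
    field_simp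
    linear_combination -4 * hη
  exact existsUnique_pos_root_cubic.unique ⟨h0, hρ⟩ ⟨by positivity, hroot⟩

end PositiveRoot

theorem charpoly_A0C :
    let A : Matrix (Fin 3) (Fin 3) ℝ := !![2, 0, 1; 0, 2, 1; 0, 0, 1]
    let Cm : Matrix (Fin 3) (Fin 3) ℝ := !![0, 1, 0; 0, 0, 1; 1, 0, 0]
    (A * Cm).charpoly = X ^ 3 - X ^ 2 - Polynomial.C 2 * X - Polynomial.C 4 ∧
    (∃! ρ : ℝ, 0 < ρ ∧ ρ ^ 3 - ρ ^ 2 - 2 * ρ - 4 = 0) ∧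
    (∀ ρ : ℝ, 0 < ρ → ρ ^ 3 - ρ ^ 2 - 2 * ρ - 4 = 0 →
      (∀ z : ℂ, z ^ 3 - z ^ 2 - 2 * z - 4 = 0 → z ≠ (ρ : ℂ) → ‖z‖ < ρ) ∧
      (∀ η : ℝ, η ^ 3 + η ^ 2 + η - 2 = 0 → ρ = 2 / η)) :=
  ⟨charpoly_mul_A0_C, existsUnique_pos_root_cubic, fun _ h0 hρ =>
    ⟨fun _ hz hne => norm_lt_of_root_cubic h0 hρ hz hne,
      fun _ hη => eq_two_div_of_root_cubic h0 hρ hη⟩⟩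
end

section
/- Let b, b' : ℕ → ℝ be functions with b(n), b'(n) ≥ 2, and suppose there is C ≥ 1 with b(⌊r/C⌋) ≤ b'(r) ≤ b(Cr) for all r. Fix 0 < α' < α'' < β'' < β' ≤ 1. Then for all sufficiently large t, if log b'(t) ≤ t^{α'} then log b(⌊t/C⌋) ≤ ⌊t/C⌋^{α''} (i.e. large elements of the lower set of b' for α' yield, after scaling by C, elements of the lower set of b for α''); similarly, for all sufficiently large s, log b'(s) ≥ s^{β'} implies log b(Cs) ≥ (Cs)^{β''}. -/
open Filter

theorem pseudo_period_invariance (b b' : ℕ → ℝ)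
    (hb : ∀ n : ℕ, 2 ≤ b n) (hb' : ∀ n : ℕ, 2 ≤ b' n)
    (C : ℕ) (hC : 1 ≤ C)
    (hcomp : ∀ r : ℕ, b (r / C) ≤ b' r ∧ b' r ≤ b (C * r))
    (α' α'' β'' β' : ℝ)
    (h1 : 0 < α') (h2 : α' < α'') (h3 : α'' < β'') (h4 : β'' < β') (h5 : β' ≤ 1) :
    (∀ᶠ t : ℕ in atTop,
      Real.log (b' t) ≤ (t : ℝ) ^ α' → Real.log (b (t / C)) ≤ ((t / C : ℕ) : ℝ) ^ α'') ∧
    (∀ᶠ s : ℕ in atTop,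
      (s : ℝ) ^ β' ≤ Real.log (b' s) → ((C * s : ℕ) : ℝ) ^ β'' ≤ Real.log (b (C * s))) := by
  have hα'' : (0:ℝ) < α'' := h1.trans h2
  have hβ'' : (0:ℝ) < β'' := hα''.trans h3
  have hCpos : (0:ℝ) < C := by exact_mod_cast hC
  constructor
  · have T : Tendsto (fun t : ℕ => (t : ℝ) ^ (α'' - α')) atTop atTop :=
      (tendsto_rpow_atTop (by linarith)).comp tendsto_natCast_atTop_atTop
    filter_upwards [T.eventually_ge_atTop ((2 * C : ℝ) ^ α''),
      eventually_ge_atTop (2 * C)] with t hE h2C hlog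
    have htpos : (0:ℝ) < t := by
      have : 0 < t := lt_of_lt_of_le (by positivity) h2C
      exact_mod_cast this
    have ht2C : (2 * C : ℝ) ≤ t := by exact_mod_cast h2C
    have hb0 : (0:ℝ) < b (t / C) := lt_of_lt_of_le two_pos (hb _)
    have hfloor : (t : ℝ) / (2 * C) ≤ ((t / C : ℕ) : ℝ) := by
      have hmod : t < C * (t / C) + C := by
        have h1' := Nat.div_add_mod t C
        have h2' := Nat.mod_lt t (show 0 < C from hC)
        omega
      have hmodR : (t : ℝ) < C * ((t / C : ℕ) : ℝ) + C := by exact_mod_cast hmod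
      rw [div_le_iff₀ (by positivity)]
      linarith
    have hstep : (t : ℝ) ^ α' ≤ ((t / C : ℕ) : ℝ) ^ α'' := by
      have hmul : (t : ℝ) ^ α' * (2 * C : ℝ) ^ α'' ≤ (t : ℝ) ^ α'' := by
        calc (t : ℝ) ^ α' * (2 * C : ℝ) ^ α''
            ≤ (t : ℝ) ^ α' * (t : ℝ) ^ (α'' - α') := by
              gcongr
          _ = (t : ℝ) ^ α'' := by
              rw [← Real.rpow_add htpos]; ring_nf
      have hdiv : (t : ℝ) ^ α' ≤ ((t : ℝ) / (2 * C)) ^ α'' := by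
        rw [Real.div_rpow htpos.le (by positivity), le_div_iff₀ (by positivity)]
        exact hmul
      exact hdiv.trans (Real.rpow_le_rpow (by positivity) hfloor hα''.le)
    calc Real.log (b (t / C)) ≤ Real.log (b' t) := Real.log_le_log hb0 (hcomp t).1
      _ ≤ (t : ℝ) ^ α' := hlog
      _ ≤ ((t / C : ℕ) : ℝ) ^ α'' := hstep
  · have T : Tendsto (fun s : ℕ => (s : ℝ) ^ (β' - β'')) atTop atTop :=
      (tendsto_rpow_atTop (by linarith)).comp tendsto_natCast_atTop_atTop
    filter_upwards [T.eventually_ge_atTop ((C : ℝ) ^ β''),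
      eventually_ge_atTop 1] with s hE hs hlog
    have hspos : (0:ℝ) < s := by exact_mod_cast hs
    have hb'0 : (0:ℝ) < b' s := lt_of_lt_of_le two_pos (hb' _)
    have key : ((C * s : ℕ) : ℝ) ^ β'' ≤ (s : ℝ) ^ β' := by
      push_cast
      rw [Real.mul_rpow (by positivity) (by positivity)]
      calc (C : ℝ) ^ β'' * (s : ℝ) ^ β''
          ≤ (s : ℝ) ^ (β' - β'') * (s : ℝ) ^ β'' := by
            gcongr
        _ = (s : ℝ) ^ β' := by rw [← Real.rpow_add hspos]; ring_nf
    calc ((C * s : ℕ) : ℝ) ^ β'' ≤ (s : ℝ) ^ β' := key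
      _ ≤ Real.log (b' s) := hlog
      _ ≤ Real.log (b (C * s)) := Real.log_le_log hb'0 (hcomp s).2
end

section
/- There exist uncountably many functions ξ : ℕ × ℕ → {0,1} such that for every x, ξ(x, y+1) ≠ ξ(x, y) for all y, and for any two distinct such functions ξ₁ ≠ ξ₂ and any bijection φ : ℕ → ℕ×ℕ, setting f_i = ξ∘φ, the following holds: if f_{ξ₁}(i) < f_{ξ₂}(i) for some i, then there exists j > i with f_{ξ₂}(j) < f_{ξ₁}(j). -/
/-!
Take for `S` the set of all `ξ` alternating in the second coordinate. It is uncountable, since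
`ξ (x, y) = g x xor (y odd)` embeds `ℕ → Bool` into it. If `ξ₁ (x, y) < ξ₂ (x, y)` then, both
being alternating, `ξ₂ (x, y + 2k + 1) < ξ₁ (x, y + 2k + 1)` for every `k`; a bijection
`φ : ℕ ≃ ℕ × ℕ` pulls these infinitely many points back to infinitely many indices, some beyond `i`.
-/

def alternatingSet : Set (ℕ × ℕ → Bool) :=
  {ξ | ∀ x y, ξ (x, y + 1) ≠ ξ (x, y)}

section alternatingSet

variable {ξ : ℕ × ℕ → Bool}

theorem apply_add_two_mul_of_mem_alternatingSet (hξ : ξ ∈ alternatingSet) (x y k : ℕ) :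
    ξ (x, y + 2 * k) = ξ (x, y) := by
  induction k with
  | zero => rfl
  | succ k ih =>
    rw [← ih, show y + 2 * (k + 1) = y + 2 * k + 1 + 1 by ring,
      Bool.eq_not_of_ne (hξ x _), Bool.eq_not_of_ne (hξ x _), Bool.not_not]

theorem apply_add_two_mul_add_one_of_mem_alternatingSet (hξ : ξ ∈ alternatingSet) (x y k : ℕ) :
    ξ (x, y + 2 * k + 1) = !ξ (x, y) := by
  rw [Bool.eq_not_of_ne (hξ x _), apply_add_two_mul_of_mem_alternatingSet hξ]

theorem infinite_setOf_lt_of_mem_alternatingSet {ξ₁ ξ₂ : ℕ × ℕ → Bool}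
    (h₁ : ξ₁ ∈ alternatingSet) (h₂ : ξ₂ ∈ alternatingSet) {p : ℕ × ℕ} (hp : ξ₁ p < ξ₂ p) :
    {q | ξ₂ q < ξ₁ q}.Infinite := by
  obtain ⟨hξ₁, hξ₂⟩ := Bool.lt_iff.mp hp
  refine Set.infinite_of_injective_forall_mem (f := fun k : ℕ => (p.1, p.2 + 2 * k + 1))
    (fun a b hab => by simpa using hab) fun k => ?_
  simp [apply_add_two_mul_add_one_of_mem_alternatingSet h₁,
    apply_add_two_mul_add_one_of_mem_alternatingSet h₂, hξ₁, hξ₂]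

def parityShift (g : ℕ → Bool) (p : ℕ × ℕ) : Bool :=
  g p.1 ^^ p.2.bodd

theorem parityShift_mem_alternatingSet (g : ℕ → Bool) : parityShift g ∈ alternatingSet := by
  intro x y
  simp [parityShift, Nat.bodd_succ]

theorem parityShift_injective : Function.Injective parityShift := fun g₁ g₂ h =>
  funext fun x => by simpa [parityShift] using congrFun h (x, 0)

theorem not_countable_alternatingSet : ¬alternatingSet.Countable := by
  have hunc : ¬Countable (ℕ → Bool) := by
    simpa [← Cardinal.mk_le_aleph0_iff] using Cardinal.aleph0_lt_continuum
  intro hS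
  have hpre : parityShift ⁻¹' alternatingSet = Set.univ :=
    Set.eq_univ_of_forall parityShift_mem_alternatingSet
  apply hunc
  rw [← Set.countable_univ_iff, ← hpre]
  exact hS.preimage parityShift_injective

end alternatingSet

theorem Equiv.exists_gt_apply_mem_of_infinite {β : Type*} (φ : ℕ ≃ β) {T : Set β}
    (hT : T.Infinite) (i : ℕ) : ∃ j, i < j ∧ φ j ∈ T := by
  have hpre : (φ ⁻¹' T).Infinite := hT.preimage (by simp)
  obtain ⟨j, hj, hij⟩ := hpre.exists_gt i
  exact ⟨j, hij, hj⟩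

theorem antichain_diagonal :
    ∃ S : Set (ℕ × ℕ → Bool),
      ¬S.Countable ∧
      (∀ ξ ∈ S, ∀ x y : ℕ, ξ (x, y + 1) ≠ ξ (x, y)) ∧
      (∀ ξ₁ ∈ S, ∀ ξ₂ ∈ S, ξ₁ ≠ ξ₂ →
        ∀ φ : ℕ ≃ ℕ × ℕ, ∀ i : ℕ, ξ₁ (φ i) < ξ₂ (φ i) →
          ∃ j : ℕ, i < j ∧ ξ₂ (φ j) < ξ₁ (φ j)) := by
  refine ⟨alternatingSet, not_countable_alternatingSet, fun ξ hξ => hξ, ?_⟩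
  intro ξ₁ h₁ ξ₂ h₂ _ φ i hi
  exact φ.exists_gt_apply_mem_of_infinite (infinite_setOf_lt_of_mem_alternatingSet h₁ h₂ hi) i
end
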